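/- Necessity of a = d (algebraic core of the Entropy Inequalities theorem): Fix (ρ,e) ∈ (0,∞)² with p_e(ρ,e) ≠ 0, and real numbers a ≥ 0, d > 0; set x := 1 − a/d. Define the symmetric 2×2 matrix 𝕊₂ with entries s₁₁ = h₁₁ + x ρ^{−2} s_e p_ρ, s₁₂ = h₁₂ + (1/2) x ρ^{−2} s_e p_e, s₂₂ = h₂₂, where h₁₁ = s_ρ² c_p^{−1} + ρ^{−2} ∂_ρ(ρ² s_ρ), h₁₂ = s_ρ s_e c_p^{−1} + s_{ρe}, h₂₂ = s_e² c_p^{−1} + s_{ee}. Then det(𝕊₂) = −(1/4) x² ρ^{−4} s_e² p_e², and consequently 𝕊₂ is negative semi-definite if and only if x = 0, i.e., if and only if a = d. -/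

import Mathlib

noncomputable section

open Real

/-- Partial derivative with respect to the first variable (`ρ`). -/
def D1 (f : ℝ × ℝ → ℝ) (x : ℝ × ℝ) : ℝ := fderiv ℝ f x (1, 0)

/-- Partial derivative with respect to the second variable (`e`). -/
def D2 (f : ℝ × ℝ → ℝ) (x : ℝ × ℝ) : ℝ := fderiv ℝ f x (0, 1)

/-- The state domain `(0,∞)²`. -/
def dom : Set (ℝ × ℝ) := {x : ℝ × ℝ | 0 < x.1 ∧ 0 < x.2}

/-- `s_ρ` -/
def sRho (s : ℝ × ℝ → ℝ) : ℝ × ℝ → ℝ := D1 s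

/-- `s_e` -/
def sE (s : ℝ × ℝ → ℝ) : ℝ × ℝ → ℝ := D2 s

/-- `s_{ρe}` -/
def sRhoE (s : ℝ × ℝ → ℝ) : ℝ × ℝ → ℝ := D1 (D2 s)

/-- `s_{ee}` -/
def sEE (s : ℝ × ℝ → ℝ) : ℝ × ℝ → ℝ := D2 (D2 s)

/-- The pressure `p := -ρ² s_ρ / s_e`. -/
def press (s : ℝ × ℝ → ℝ) (x : ℝ × ℝ) : ℝ := -x.1 ^ 2 * sRho s x / sE s x

/-- The temperature `T := 1 / s_e`. -/
def temp (s : ℝ × ℝ → ℝ) (x : ℝ × ℝ) : ℝ := (sE s x)⁻¹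

/-- `∂_ρ(ρ² s_ρ)` -/
def dRho2sRho (s : ℝ × ℝ → ℝ) (x : ℝ × ℝ) : ℝ :=
  deriv (fun r : ℝ => r ^ 2 * sRho s (r, x.2)) x.1

/-- `det Σ := ∂_ρ(ρ² s_ρ)·s_{ee} - ρ² s_{ρe}²`. -/
def detSigma (s : ℝ × ℝ → ℝ) (x : ℝ × ℝ) : ℝ :=
  dRho2sRho s x * sEE s x - x.1 ^ 2 * (sRhoE s x) ^ 2

/-- `p_ρ` -/
def pRho (s : ℝ × ℝ → ℝ) : ℝ × ℝ → ℝ := D1 (press s)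

/-- `p_e` -/
def pE (s : ℝ × ℝ → ℝ) : ℝ × ℝ → ℝ := D2 (press s)

/-- `T_ρ` -/
def tRho (s : ℝ × ℝ → ℝ) : ℝ × ℝ → ℝ := D1 (temp s)

/-- `T_e` -/
def tE (s : ℝ × ℝ → ℝ) : ℝ × ℝ → ℝ := D2 (temp s)

/-- The specific heat at constant pressure
`c_p := s_e⁻¹ (p_ρ s_e - p_e s_ρ) / (p_ρ T_e - p_e T_ρ)`. -/
def cP (s : ℝ × ℝ → ℝ) (x : ℝ × ℝ) : ℝ :=
  (sE s x)⁻¹ * (pRho s x * sE s x - pE s x * sRho s x) /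
    (pRho s x * tE s x - pE s x * tRho s x)

/-- The squared sound speed `c² := p_ρ - (s_ρ/s_e) p_e`. -/
def cSq (s : ℝ × ℝ → ℝ) (x : ℝ × ℝ) : ℝ := pRho s x - sRho s x / sE s x * pE s x

/-- The convexity conditions `∂_ρ(ρ² s_ρ) < 0`, `s_{ee} < 0`, `det Σ > 0` on the domain. -/
def Convexity (s : ℝ × ℝ → ℝ) : Prop :=
  ∀ x ∈ dom, dRho2sRho s x < 0 ∧ sEE s x < 0 ∧ 0 < detSigma s x

/-!
Write `α = ρ⁻² ∂_ρ(ρ² s_ρ)`, `β = s_{ρe}`, `γ = s_{ee}` and `v = (s_ρ, s_e)`. The convexity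
conditions say that `M = [[α, β], [β, γ]]` is negative definite, and differentiating `p` and `T`
gives `(p_ρ, p_e) = ρ² s_e⁻² M (-s_e, s_ρ)` and `c_p = -adj_M(v) / det M`, where `adj_M` is the
quadratic form of the adjugate of `M`. Hence `h = M + c_p⁻¹ v vᵀ` is exactly the rank-one update
that makes `M` singular while keeping it negative semidefinite, and `(-p_e, p_ρ)` is annihilated
by the second row of `h`. Expanding `det 𝕊₂` then leaves only `-(x s_e p_e / (2ρ²))²`, so `𝕊₂`
is negative semidefinite exactly when `x = 0`.
-/

def adjugateForm (α β γ a b : ℝ) : ℝ := γ * a ^ 2 - 2 * β * a * b + α * b ^ 2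

section RankOneUpdate

variable {α β γ a b k : ℝ}

theorem adjugateForm_neg (hα : α < 0) (hdet : 0 < α * γ - β ^ 2) (hb : b ≠ 0) :
    adjugateForm α β γ a b < 0 := by
  have key : α * adjugateForm α β γ a b = (α * b - β * a) ^ 2 + (α * γ - β ^ 2) * a ^ 2 := by
    unfold adjugateForm; ring
  have hpos : 0 < α * adjugateForm α β γ a b := by
    rw [key]
    rcases eq_or_ne a 0 with rfl | ha
    · have := mul_ne_zero hα.ne hb
      simp only [mul_zero, sub_zero]
      positivity
    · positivity
  exact neg_of_mul_pos_right hpos hα.le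

theorem rankOneUpdate_det_eq_zero (hk : k * adjugateForm α β γ a b = β ^ 2 - α * γ) :
    (α + k * a ^ 2) * (γ + k * b ^ 2) - (β + k * a * b) ^ 2 = 0 := by
  unfold adjugateForm at hk; linear_combination hk

theorem rankOneUpdate_fst_nonpos (hk : k * adjugateForm α β γ a b = β ^ 2 - α * γ)
    (hq : adjugateForm α β γ a b < 0) : α + k * a ^ 2 ≤ 0 := by
  have key : (α + k * a ^ 2) * adjugateForm α β γ a b = (α * b - β * a) ^ 2 := by
    unfold adjugateForm at *; linear_combination a ^ 2 * hk
  exact nonpos_of_mul_nonneg_left (key ▸ sq_nonneg _) hq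

theorem rankOneUpdate_snd_nonpos (hk : k * adjugateForm α β γ a b = β ^ 2 - α * γ)
    (hq : adjugateForm α β γ a b < 0) : γ + k * b ^ 2 ≤ 0 := by
  have key : (γ + k * b ^ 2) * adjugateForm α β γ a b = (γ * a - β * b) ^ 2 := by
    unfold adjugateForm at *; linear_combination b ^ 2 * hk
  exact nonpos_of_mul_nonneg_left (key ▸ sq_nonneg _) hq

theorem rankOneUpdate_cross_eq_zero (hk : k * adjugateForm α β γ a b = β ^ 2 - α * γ) :
    (β * a - α * b) * (γ + k * b ^ 2) - (γ * a - β * b) * (β + k * a * b) = 0 := by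
  unfold adjugateForm at hk; linear_combination -b * hk

end RankOneUpdate

section QuadForm

variable {s11 s12 s22 : ℝ}

theorem det_nonneg_of_quadForm_nonpos
    (h : ∀ X Y : ℝ, s11 * X ^ 2 + 2 * s12 * X * Y + s22 * Y ^ 2 ≤ 0) :
    0 ≤ s11 * s22 - s12 ^ 2 := by
  have := discrim_le_zero (a := -s11) (b := -(2 * s12)) (c := -s22) fun X => by
    linarith [h X 1]
  unfold discrim at this
  linarith

theorem quadForm_nonpos_of_det_nonneg (h11 : s11 ≤ 0) (h22 : s22 ≤ 0)
    (hdet : 0 ≤ s11 * s22 - s12 ^ 2) (X Y : ℝ) :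
    s11 * X ^ 2 + 2 * s12 * X * Y + s22 * Y ^ 2 ≤ 0 := by
  rcases h11.lt_or_eq with h11 | rfl
  · have key : s11 * (s11 * X ^ 2 + 2 * s12 * X * Y + s22 * Y ^ 2)
        = (s11 * X + s12 * Y) ^ 2 + (s11 * s22 - s12 ^ 2) * Y ^ 2 := by ring
    exact nonpos_of_mul_nonneg_right (key ▸ by positivity) h11
  · have : s12 = 0 := by nlinarith
    subst this
    nlinarith [sq_nonneg Y]

end QuadForm

theorem isOpen_dom : IsOpen dom := isOpen_Ioi.prod isOpen_Ioi

section PartialDerivatives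

variable {f : ℝ × ℝ → ℝ} {z : ℝ × ℝ}

theorem hasDerivAt_D1 (hf : DifferentiableAt ℝ f z) :
    HasDerivAt (fun r => f (r, z.2)) (D1 f z) z.1 :=
  hf.hasFDerivAt.comp_hasDerivAt z.1 ((hasDerivAt_id z.1).prodMk (hasDerivAt_const _ _))

theorem hasDerivAt_D2 (hf : DifferentiableAt ℝ f z) :
    HasDerivAt (fun e => f (z.1, e)) (D2 f z) z.2 :=
  hf.hasFDerivAt.comp_hasDerivAt z.2 ((hasDerivAt_const _ _).prodMk (hasDerivAt_id z.2))

theorem differentiableAt_fderiv_apply (hf : ContDiffAt ℝ 2 f z) (v : ℝ × ℝ) :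
    DifferentiableAt ℝ (fun x => fderiv ℝ f x v) z :=
  ((hf.fderiv_right (m := 1) (by norm_num)).differentiableAt one_ne_zero).clm_apply
    (differentiableAt_const v)

theorem fderiv_fderiv_apply_comm (hf : ContDiffAt ℝ 2 f z) (v w : ℝ × ℝ) :
    fderiv ℝ (fun x => fderiv ℝ f x v) z w = fderiv ℝ (fun x => fderiv ℝ f x w) z v := by
  have hd := (hf.fderiv_right (m := 1) (by norm_num)).differentiableAt one_ne_zero
  have hsymm := hf.isSymmSndFDerivAt (by simp)
  simp only [fderiv_clm_apply hd (differentiableAt_const _), fderiv_fun_const, Pi.zero_apply,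
    ContinuousLinearMap.comp_zero, zero_add, ContinuousLinearMap.flip_apply]
  exact hsymm w v

end PartialDerivatives

section Thermodynamics

variable {s : ℝ × ℝ → ℝ} {z : ℝ × ℝ}

theorem differentiableAt_sRho (hs : ContDiffAt ℝ 2 s z) : DifferentiableAt ℝ (sRho s) z :=
  differentiableAt_fderiv_apply hs (1, 0)

theorem differentiableAt_sE (hs : ContDiffAt ℝ 2 s z) : DifferentiableAt ℝ (sE s) z :=
  differentiableAt_fderiv_apply hs (0, 1)

theorem differentiableAt_press (hs : ContDiffAt ℝ 2 s z) (hb : sE s z ≠ 0) :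
    DifferentiableAt ℝ (press s) z := by
  have := differentiableAt_sRho hs
  have := differentiableAt_sE hs
  unfold press
  simp only [div_eq_mul_inv]
  fun_prop (disch := assumption)

theorem pRho_eq (hs : ContDiffAt ℝ 2 s z) (hb : sE s z ≠ 0) :
    pRho s z = (z.1 ^ 2 * sRho s z * sRhoE s z - dRho2sRho s z * sE s z) / sE s z ^ 2 := by
  have hnum : HasDerivAt (fun r : ℝ => -r ^ 2 * sRho s (r, z.2)) (-dRho2sRho s z) z.1 := by
    have hd : DifferentiableAt ℝ (fun r : ℝ => r ^ 2 * sRho s (r, z.2)) z.1 :=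
      (differentiableAt_pow 2).mul (hasDerivAt_D1 (differentiableAt_sRho hs)).differentiableAt
    simp only [neg_mul]
    exact hd.hasDerivAt.fun_neg
  have hden : HasDerivAt (fun r : ℝ => sE s (r, z.2)) (sRhoE s z) z.1 :=
    hasDerivAt_D1 (differentiableAt_sE hs)
  rw [pRho, (hasDerivAt_D1 (differentiableAt_press hs hb)).unique (hnum.fun_div hden hb)]
  ring

theorem pE_eq (hs : ContDiffAt ℝ 2 s z) (hb : sE s z ≠ 0) :
    pE s z = z.1 ^ 2 * (sRho s z * sEE s z - sRhoE s z * sE s z) / sE s z ^ 2 := by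
  have hnum :
      HasDerivAt (fun e : ℝ => -z.1 ^ 2 * sRho s (z.1, e)) (-z.1 ^ 2 * sRhoE s z) z.2 := by
    have := (hasDerivAt_D2 (differentiableAt_sRho hs)).const_mul (-z.1 ^ 2)
    rwa [show D2 (sRho s) z = sRhoE s z from fderiv_fderiv_apply_comm hs _ _] at this
  have hden : HasDerivAt (fun e : ℝ => sE s (z.1, e)) (sEE s z) z.2 :=
    hasDerivAt_D2 (differentiableAt_sE hs)
  rw [pE, (hasDerivAt_D2 (differentiableAt_press hs hb)).unique (hnum.fun_div hden hb)]
  ring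

theorem tRho_eq (hs : ContDiffAt ℝ 2 s z) (hb : sE s z ≠ 0) :
    tRho s z = -sRhoE s z / sE s z ^ 2 :=
  (hasDerivAt_D1 ((differentiableAt_sE hs).inv hb)).unique
    ((hasDerivAt_D1 (differentiableAt_sE hs)).inv hb)

theorem tE_eq (hs : ContDiffAt ℝ 2 s z) (hb : sE s z ≠ 0) :
    tE s z = -sEE s z / sE s z ^ 2 :=
  (hasDerivAt_D2 ((differentiableAt_sE hs).inv hb)).unique
    ((hasDerivAt_D2 (differentiableAt_sE hs)).inv hb)

theorem cP_eq (hs : ContDiffAt ℝ 2 s z) (hρ : z.1 ≠ 0) (hb : sE s z ≠ 0) :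
    cP s z = -adjugateForm (dRho2sRho s z / z.1 ^ 2) (sRhoE s z) (sEE s z) (sRho s z) (sE s z) /
      (dRho2sRho s z / z.1 ^ 2 * sEE s z - sRhoE s z ^ 2) := by
  have hnum : (sE s z)⁻¹ * (pRho s z * sE s z - pE s z * sRho s z) = z.1 ^ 2 / sE s z ^ 3 *
      -adjugateForm (dRho2sRho s z / z.1 ^ 2) (sRhoE s z) (sEE s z) (sRho s z) (sE s z) := by
    rw [pRho_eq hs hb, pE_eq hs hb, adjugateForm]
    field_simp
    ring
  have hden : pRho s z * tE s z - pE s z * tRho s z = z.1 ^ 2 / sE s z ^ 3 *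
      (dRho2sRho s z / z.1 ^ 2 * sEE s z - sRhoE s z ^ 2) := by
    rw [pRho_eq hs hb, pE_eq hs hb, tRho_eq hs hb, tE_eq hs hb]
    field_simp
    ring
  rw [cP, hnum, hden, mul_div_mul_left _ _ (div_ne_zero (pow_ne_zero 2 hρ) (pow_ne_zero 3 hb))]

theorem hForm_diag_nonpos_singular_pGrad_perp (hs : ContDiffAt ℝ 2 s z) (hρ : 0 < z.1)
    (hb : 0 < sE s z) (hA : dRho2sRho s z < 0) (hD : 0 < detSigma s z) {h11 h12 h22 : ℝ}
    (e11 : h11 = (sRho s z) ^ 2 * (cP s z)⁻¹ + dRho2sRho s z / z.1 ^ 2)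
    (e12 : h12 = sRho s z * sE s z * (cP s z)⁻¹ + sRhoE s z)
    (e22 : h22 = (sE s z) ^ 2 * (cP s z)⁻¹ + sEE s z) :
    h11 ≤ 0 ∧ h22 ≤ 0 ∧ h11 * h22 - h12 ^ 2 = 0 ∧ pRho s z * h22 - pE s z * h12 = 0 := by
  set α := dRho2sRho s z / z.1 ^ 2 with hα_def
  have hA_eq : dRho2sRho s z = z.1 ^ 2 * α := by rw [hα_def]; field_simp
  have hα : α < 0 := div_neg_of_neg_of_pos hA (by positivity)
  have hdet : 0 < α * sEE s z - sRhoE s z ^ 2 := by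
    have : detSigma s z = z.1 ^ 2 * (α * sEE s z - sRhoE s z ^ 2) := by
      rw [detSigma, hA_eq]; ring
    exact pos_of_mul_pos_right (this ▸ hD) (by positivity)
  have hq := adjugateForm_neg (a := sRho s z) hα hdet hb.ne'
  have hk : (cP s z)⁻¹ * adjugateForm α (sRhoE s z) (sEE s z) (sRho s z) (sE s z)
      = sRhoE s z ^ 2 - α * sEE s z := by
    rw [cP_eq hs hρ.ne' hb.ne', ← hα_def, inv_div, div_neg, neg_mul, div_mul_cancel₀ _ hq.ne]
    ring
  have E11 : h11 = α + (cP s z)⁻¹ * sRho s z ^ 2 := by rw [e11]; ring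
  have E12 : h12 = sRhoE s z + (cP s z)⁻¹ * sRho s z * sE s z := by rw [e12]; ring
  have E22 : h22 = sEE s z + (cP s z)⁻¹ * sE s z ^ 2 := by rw [e22]; ring
  refine ⟨E11 ▸ rankOneUpdate_fst_nonpos hk hq, E22 ▸ rankOneUpdate_snd_nonpos hk hq,
    E11 ▸ E12 ▸ E22 ▸ rankOneUpdate_det_eq_zero hk, ?_⟩
  rw [pRho_eq hs hb.ne', pE_eq hs hb.ne', E12, E22, hA_eq]
  field_simp
  linear_combination z.1 ^ 2 * rankOneUpdate_cross_eq_zero hk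

end Thermodynamics

theorem necessity_a_eq_d_general
    (s : ℝ × ℝ → ℝ) (hs : ContDiffOn ℝ 2 s dom)
    (hse : ∀ x ∈ dom, 0 < sE s x) (hconv : Convexity s)
    (z : ℝ × ℝ) (hz : z ∈ dom) (hpe : pE s z ≠ 0)
    (a dcoef x : ℝ) (hd : 0 < dcoef) (hx : x = 1 - a / dcoef)
    (h11 h12 h22 s11 s12 s22 : ℝ)
    (e11 : h11 = (sRho s z) ^ 2 * (cP s z)⁻¹ + dRho2sRho s z / z.1 ^ 2)
    (e12 : h12 = sRho s z * sE s z * (cP s z)⁻¹ + sRhoE s z)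
    (e22 : h22 = (sE s z) ^ 2 * (cP s z)⁻¹ + sEE s z)
    (f11 : s11 = h11 + x / z.1 ^ 2 * sE s z * pRho s z)
    (f12 : s12 = h12 + (1 / 2) * x / z.1 ^ 2 * sE s z * pE s z)
    (f22 : s22 = h22) :
    s11 * s22 - s12 ^ 2 = -(1 / 4) * x ^ 2 / z.1 ^ 4 * (sE s z) ^ 2 * (pE s z) ^ 2 ∧
    ((∀ X Y : ℝ, s11 * X ^ 2 + 2 * s12 * X * Y + s22 * Y ^ 2 ≤ 0) ↔ a = dcoef) := by
  have hρ : 0 < z.1 := hz.1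
  have hb := hse z hz
  obtain ⟨hA, -, hD⟩ := hconv z hz
  obtain ⟨H11, H22, Hdet, Hcross⟩ := hForm_diag_nonpos_singular_pGrad_perp
    (hs.contDiffAt (isOpen_dom.mem_nhds hz)) hρ hb hA hD e11 e12 e22
  have hdetS : s11 * s22 - s12 ^ 2 = -(1 / 4) * x ^ 2 / z.1 ^ 4 * (sE s z) ^ 2 * (pE s z) ^ 2 := by
    rw [f11, f12, f22]
    linear_combination Hdet + x / z.1 ^ 2 * sE s z * Hcross
  have hx0 : x = 0 ↔ a = dcoef := by
    rw [hx, sub_eq_zero, eq_comm, div_eq_one_iff_eq hd.ne']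
  refine ⟨hdetS, fun hneg => hx0.mp ?_, fun had => ?_⟩
  · have hnonneg := det_nonneg_of_quadForm_nonpos hneg
    rw [hdetS] at hnonneg
    by_contra! hxne
    have : 0 < x ^ 2 / z.1 ^ 4 * sE s z ^ 2 * pE s z ^ 2 := by positivity
    linarith [show -(1 / 4) * x ^ 2 / z.1 ^ 4 * sE s z ^ 2 * pE s z ^ 2
      = -(1 / 4) * (x ^ 2 / z.1 ^ 4 * sE s z ^ 2 * pE s z ^ 2) by ring]
  · rw [f11, f12, f22, hx0.mpr had]
    simpa using quadForm_nonpos_of_det_nonneg H11 H22 Hdet.ge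

/-- **Necessity of `a = d` (algebraic core of the entropy-inequalities theorem):**
`det 𝕊₂ = -(1/4) x² ρ⁻⁴ s_e² p_e²` with `x := 1 - a/d`, and consequently `𝕊₂` is
negative semi-definite if and only if `a = d`. -/
theorem necessity_a_eq_d
    (s : ℝ × ℝ → ℝ) (hs : ContDiffOn ℝ 2 s dom)
    (hse : ∀ x ∈ dom, 0 < sE s x) (hconv : Convexity s)
    (z : ℝ × ℝ) (hz : z ∈ dom) (hpe : pE s z ≠ 0)
    (a dcoef x : ℝ) (ha : 0 ≤ a) (hd : 0 < dcoef) (hx : x = 1 - a / dcoef)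
    (h11 h12 h22 s11 s12 s22 : ℝ)
    (e11 : h11 = (sRho s z) ^ 2 * (cP s z)⁻¹ + dRho2sRho s z / z.1 ^ 2)
    (e12 : h12 = sRho s z * sE s z * (cP s z)⁻¹ + sRhoE s z)
    (e22 : h22 = (sE s z) ^ 2 * (cP s z)⁻¹ + sEE s z)
    (f11 : s11 = h11 + x / z.1 ^ 2 * sE s z * pRho s z)
    (f12 : s12 = h12 + (1 / 2) * x / z.1 ^ 2 * sE s z * pE s z)
    (f22 : s22 = h22) :
    s11 * s22 - s12 ^ 2 = -(1 / 4) * x ^ 2 / z.1 ^ 4 * (sE s z) ^ 2 * (pE s z) ^ 2 ∧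
    ((∀ X Y : ℝ, s11 * X ^ 2 + 2 * s12 * X * Y + s22 * Y ^ 2 ≤ 0) ↔ a = dcoef) :=
  necessity_a_eq_d_general s hs hse hconv z hz hpe a dcoef x hd hx h11 h12 h22 s11 s12 s22 e11 e12
    e22 f11 f12 f22
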